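/- If g satisfies g(t) = c·e^{-t} + e^{-t}∑_{k=1}^{n-1} aₖ cos(kωt) + e^{-t}∑_{k=1}^{n-1} bₖ sin(kωt), then g(t)·cos²((ωt - φ)/2) equals a hyper-trigonometric form of order n whose interior coefficients (for 1 < k < n-1) are a'ₖ = aₖ/2 + ((aₖ₋₁ + aₖ₊₁)/4)cos φ + ((bₖ₊₁ - bₖ₋₁)/4)sin φ and b'ₖ = bₖ/2 + ((bₖ₋₁ + bₖ₊₁)/4)cos φ + ((aₖ₋₁ - aₖ₊₁)/4)sin φ, with constant term c' = c/2 + (a₁/4)cos φ + (b₁/4)sin φ. -/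

import Mathlib

/-!
Write trigonometric polynomials with the Fourier convention `a₀/2 + ∑ₖ (aₖ cos kx + bₖ sin kx)`.
Since `cos² ((x - φ)/2) = (1 + cos (x - φ))/2`, it suffices to multiply by `cos (x - φ)`. By the
product-to-sum formulas this sends the harmonic of frequency `k` to frequencies `k + 1` and
`k - 1`, so each new coefficient at `k ≥ 1` comes from the old ones at `k - 1` and `k + 1`.
With the constant term written as `a₀/2`, its product with `cos (x - φ)` fits the same formula
at frequency `1`; only the new constant term needs its own formula. For `g` take `a₀ = 2c`, and
the factor `e^{-t}` just comes along.
-/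

open Finset Real

noncomputable def trigPoly (a b : ℕ → ℝ) (N : ℕ) (x : ℝ) : ℝ :=
  a 0 / 2 + ∑ k ∈ Icc 1 N, (a k * cos (k * x) + b k * sin (k * x))

-- The coefficients of `trigPoly a b N x * cos (x - φ)`, with the same convention for the constant.
noncomputable def cosCoeffMulCosSub (a b : ℕ → ℝ) (φ : ℝ) : ℕ → ℝ
  | 0 => a 1 * cos φ + b 1 * sin φ
  | k + 1 => ((a k + a (k + 2)) * cos φ + (b (k + 2) - b k) * sin φ) / 2

noncomputable def sinCoeffMulCosSub (a b : ℕ → ℝ) (φ : ℝ) : ℕ → ℝ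
  | 0 => 0
  | k + 1 => ((b k + b (k + 2)) * cos φ + (a k - a (k + 2)) * sin φ) / 2

lemma sum_Icc_one_eq_sum_range (f : ℕ → ℝ) (N : ℕ) :
    ∑ k ∈ Icc 1 N, f k = ∑ k ∈ range N, f (k + 1) := by
  rw [range_eq_Ico, sum_Ico_add' f 0 N 1]
  rfl

lemma cos_sq_half_sub (x φ : ℝ) : cos ((x - φ) / 2) ^ 2 = 1 / 2 + cos (x - φ) / 2 := by
  rw [cos_sq, show 2 * ((x - φ) / 2) = x - φ by ring]

lemma harmonic_mul_cos_sub (p q y x φ : ℝ) :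
    (p * cos y + q * sin y) * cos (x - φ)
      = ((p * cos φ - q * sin φ) / 2 * cos (y + x) + (p * sin φ + q * cos φ) / 2 * sin (y + x))
        + ((p * cos φ + q * sin φ) / 2 * cos (y - x)
          + (q * cos φ - p * sin φ) / 2 * sin (y - x)) := by
  simp only [cos_add, sin_add, cos_sub, sin_sub]
  ring

lemma trigPoly_mul_cos_sub {a b : ℕ → ℝ} {N : ℕ} (hb₀ : b 0 = 0)
    (ha : ∀ k, N < k → a k = 0) (hb : ∀ k, N < k → b k = 0) (x φ : ℝ) :
    trigPoly a b N x * cos (x - φ)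
      = trigPoly (cosCoeffMulCosSub a b φ) (sinCoeffMulCosSub a b φ) (N + 1) x := by
  set raised : ℕ → ℝ := fun j => (a j * cos φ - b j * sin φ) / 2 * cos ((j + 1 : ℕ) * x)
    + (a j * sin φ + b j * cos φ) / 2 * sin ((j + 1 : ℕ) * x) with hraised
  set lowered : ℕ → ℝ := fun j => (a (j + 1) * cos φ + b (j + 1) * sin φ) / 2 * cos (j * x)
    + (b (j + 1) * cos φ - a (j + 1) * sin φ) / 2 * sin (j * x) with hlowered
  have splits (j : ℕ) : (a (j + 1) * cos ((j + 1 : ℕ) * x) + b (j + 1) * sin ((j + 1 : ℕ) * x))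
      * cos (x - φ) = raised (j + 1) + lowered j := by
    have raise : ((j + 1 : ℕ) : ℝ) * x + x = ((j + 1 + 1 : ℕ) : ℝ) * x := by push_cast; ring
    have lower : ((j + 1 : ℕ) : ℝ) * x - x = j * x := by push_cast; ring
    rw [harmonic_mul_cos_sub, raise, lower]
  have merge (j : ℕ) : cosCoeffMulCosSub a b φ (j + 1) * cos ((j + 1 : ℕ) * x)
      + sinCoeffMulCosSub a b φ (j + 1) * sin ((j + 1 : ℕ) * x) = raised j + lowered (j + 1) := by
    simp only [cosCoeffMulCosSub, sinCoeffMulCosSub, hraised, hlowered]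
    ring
  have raised_zero : raised 0 = a 0 / 2 * cos (x - φ) := by
    simp only [hraised, hb₀, zero_add, Nat.cast_one, one_mul, cos_sub]
    ring
  have lowered_zero : lowered 0 = cosCoeffMulCosSub a b φ 0 / 2 := by
    simp only [hlowered, cosCoeffMulCosSub, zero_add, Nat.cast_zero, zero_mul, cos_zero, sin_zero]
    ring
  have lowered_top : lowered N = 0 ∧ lowered (N + 1) = 0 := by
    simp only [hlowered, ha _ (by omega : N < N + 1), hb _ (by omega : N < N + 1),
      ha _ (by omega : N < N + 1 + 1), hb _ (by omega : N < N + 1 + 1)]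
    constructor <;> ring
  have lowered_shift :
      ∑ j ∈ range N, lowered (j + 1) + lowered 0 = ∑ j ∈ range N, lowered j + lowered N := by
    rw [← sum_range_succ', sum_range_succ]
  clear_value raised lowered
  unfold trigPoly
  rw [sum_Icc_one_eq_sum_range, sum_Icc_one_eq_sum_range, add_mul, sum_mul]
  simp only [splits, merge, sum_add_distrib]
  rw [sum_range_succ' raised, sum_range_succ (fun j => lowered (j + 1))]
  linear_combination lowered_zero - raised_zero - lowered_shift - lowered_top.1 - lowered_top.2

lemma trigPoly_add (a b a' b' : ℕ → ℝ) (N : ℕ) (x : ℝ) :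
    trigPoly (a + a') (b + b') N x = trigPoly a b N x + trigPoly a' b' N x := by
  simp only [trigPoly, Pi.add_apply, add_mul, sum_add_distrib]
  ring

lemma trigPoly_smul (r : ℝ) (a b : ℕ → ℝ) (N : ℕ) (x : ℝ) :
    trigPoly (r • a) (r • b) N x = r * trigPoly a b N x := by
  simp only [trigPoly, Pi.smul_apply, smul_eq_mul, mul_add, mul_sum, mul_assoc]
  ring

lemma trigPoly_succ_of_eq_zero {a b : ℕ → ℝ} {N : ℕ} (ha : a (N + 1) = 0) (hb : b (N + 1) = 0)
    (x : ℝ) : trigPoly a b (N + 1) x = trigPoly a b N x := by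
  rw [trigPoly, sum_Icc_succ_top (Nat.le_add_left 1 N), ha, hb, trigPoly]
  ring

lemma trigPoly_mul_cos_sq_half_sub {a b : ℕ → ℝ} {N : ℕ} (hb₀ : b 0 = 0)
    (ha : ∀ k, N < k → a k = 0) (hb : ∀ k, N < k → b k = 0) (x φ : ℝ) :
    trigPoly a b N x * cos ((x - φ) / 2) ^ 2
      = trigPoly ((1 / 2 : ℝ) • (a + cosCoeffMulCosSub a b φ))
          ((1 / 2 : ℝ) • (b + sinCoeffMulCosSub a b φ)) (N + 1) x := by
  rw [trigPoly_smul, trigPoly_add, ← trigPoly_mul_cos_sub hb₀ ha hb,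
    trigPoly_succ_of_eq_zero (ha _ N.lt_add_one) (hb _ N.lt_add_one), cos_sq_half_sub]
  ring

lemma trigPoly_update_indicator (c : ℝ) (a b : ℕ → ℝ) (N : ℕ) (x : ℝ) :
    trigPoly (Function.update ((Set.Icc 1 N).indicator a) 0 (2 * c))
        ((Set.Icc 1 N).indicator b) N x
      = c + ∑ k ∈ Icc 1 N, a k * cos (k * x) + ∑ k ∈ Icc 1 N, b k * sin (k * x) := by
  have harmonics : ∑ k ∈ Icc 1 N, (Function.update ((Set.Icc 1 N).indicator a) 0 (2 * c) k
      * cos (k * x) + (Set.Icc 1 N).indicator b k * sin (k * x))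
      = ∑ k ∈ Icc 1 N, (a k * cos (k * x) + b k * sin (k * x)) := by
    refine sum_congr rfl fun k hk => ?_
    have hk' : k ∈ Set.Icc 1 N := by simpa using hk
    rw [Function.update_of_ne (Nat.one_le_iff_ne_zero.mp hk'.1), Set.indicator_of_mem hk',
      Set.indicator_of_mem hk']
  rw [trigPoly, harmonics, Function.update_self, sum_add_distrib]
  ring

theorem hyper_trig_recursion_step_general (n : ℕ) (hn : 2 < n) (ω φ c : ℝ)
    (a b : ℕ → ℝ) (g : ℝ → ℝ)
    (hg : ∀ t : ℝ, g t = c * Real.exp (-t)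
      + Real.exp (-t) * ∑ k ∈ Finset.Icc 1 (n - 1), a k * Real.cos (k * ω * t)
      + Real.exp (-t) * ∑ k ∈ Finset.Icc 1 (n - 1), b k * Real.sin (k * ω * t)) :
    ∃ (c' : ℝ) (a' b' : ℕ → ℝ),
      (∀ t : ℝ, g t * Real.cos ((ω * t - φ) / 2) ^ 2
          = c' * Real.exp (-t)
            + Real.exp (-t) * ∑ k ∈ Finset.Icc 1 n, a' k * Real.cos (k * ω * t)
            + Real.exp (-t) * ∑ k ∈ Finset.Icc 1 n, b' k * Real.sin (k * ω * t)) ∧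
      (∀ k, 1 < k → k < n - 1 →
        a' k = a k / 2 + ((a (k - 1) + a (k + 1)) / 4) * Real.cos φ
                + ((b (k + 1) - b (k - 1)) / 4) * Real.sin φ ∧
        b' k = b k / 2 + ((b (k - 1) + b (k + 1)) / 4) * Real.cos φ
                + ((a (k - 1) - a (k + 1)) / 4) * Real.sin φ) ∧
      c' = c / 2 + (a 1 / 4) * Real.cos φ + (b 1 / 4) * Real.sin φ := by
  set A := Function.update ((Set.Icc 1 (n - 1)).indicator a) 0 (2 * c) with hA
  set B := (Set.Icc 1 (n - 1)).indicator b with hB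
  have hg' (t : ℝ) : g t = exp (-t) * trigPoly A B (n - 1) (ω * t) := by
    rw [hg, trigPoly_update_indicator]
    simp only [mul_assoc]
    ring
  have coeffs {k : ℕ} (hk₀ : 0 < k) (hkn : k < n) : A k = a k ∧ B k = b k := by
    simp [hA, hB, hk₀.ne', show k ≤ n - 1 by omega]
  have vanish {k : ℕ} (hk : n - 1 < k) : A k = 0 ∧ B k = 0 := by
    simp [hA, hB, show k ≠ 0 by omega, hk]
  set A' := (1 / 2 : ℝ) • (A + cosCoeffMulCosSub A B φ)
  set B' := (1 / 2 : ℝ) • (B + sinCoeffMulCosSub A B φ)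
  refine ⟨A' 0 / 2, A', B', fun t => ?_, fun k hk₁ hkn => ?_, ?_⟩
  · rw [hg', mul_assoc, trigPoly_mul_cos_sq_half_sub (by simp [hB]) (fun k hk => (vanish hk).1)
      (fun k hk => (vanish hk).2), Nat.sub_add_cancel (by omega), trigPoly, sum_add_distrib]
    simp only [mul_assoc]
    ring
  · obtain ⟨j, rfl⟩ : ∃ j, k = j + 1 := ⟨k - 1, by omega⟩
    obtain ⟨hAj, hBj⟩ := coeffs (k := j) (by omega) (by omega)
    obtain ⟨hAj₁, hBj₁⟩ := coeffs (k := j + 1) (by omega) (by omega)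
    obtain ⟨hAj₂, hBj₂⟩ := coeffs (k := j + 2) (by omega) (by omega)
    simp only [A', B', Pi.smul_apply, Pi.add_apply, smul_eq_mul, cosCoeffMulCosSub,
      sinCoeffMulCosSub, hAj, hBj, hAj₁, hBj₁, hAj₂, hBj₂, Nat.add_sub_cancel]
    constructor <;> ring
  · obtain ⟨hA₁, hB₁⟩ := coeffs (k := 1) one_pos (by omega)
    simp only [A', Pi.smul_apply, Pi.add_apply, smul_eq_mul, cosCoeffMulCosSub, hA₁, hB₁,
      show A 0 = 2 * c from Function.update_self _ _ _]
    ring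

theorem hyper_trig_recursion_step (n : ℕ) (hn : 2 < n) (ω φ c : ℝ) (hω : 0 < ω)
    (a b : ℕ → ℝ) (g : ℝ → ℝ)
    (hg : ∀ t : ℝ, g t = c * Real.exp (-t)
      + Real.exp (-t) * ∑ k ∈ Finset.Icc 1 (n - 1), a k * Real.cos (k * ω * t)
      + Real.exp (-t) * ∑ k ∈ Finset.Icc 1 (n - 1), b k * Real.sin (k * ω * t)) :
    ∃ (c' : ℝ) (a' b' : ℕ → ℝ),
      (∀ t : ℝ, g t * Real.cos ((ω * t - φ) / 2) ^ 2
          = c' * Real.exp (-t)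
            + Real.exp (-t) * ∑ k ∈ Finset.Icc 1 n, a' k * Real.cos (k * ω * t)
            + Real.exp (-t) * ∑ k ∈ Finset.Icc 1 n, b' k * Real.sin (k * ω * t)) ∧
      (∀ k, 1 < k → k < n - 1 →
        a' k = a k / 2 + ((a (k - 1) + a (k + 1)) / 4) * Real.cos φ
                + ((b (k + 1) - b (k - 1)) / 4) * Real.sin φ ∧
        b' k = b k / 2 + ((b (k - 1) + b (k + 1)) / 4) * Real.cos φ
                + ((a (k - 1) - a (k + 1)) / 4) * Real.sin φ) ∧
      c' = c / 2 + (a 1 / 4) * Real.cos φ + (b 1 / 4) * Real.sin φ :=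
  hyper_trig_recursion_step_general n hn ω φ c a b g hg
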